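/- arXiv:2306.10655 — 3 statements merged into one kernel-verified Lean document; each statement's English description precedes it below -/
import Mathlib

section
/- Let m ∈ ℤ_{≥0}, 0 < α < 1 and γ > 0. Then ∑_{k=0}^∞ α^k ((γ)_k / k!) k^m = (1−α)^{−γ} ∑_{l=0}^{m} S(m,l) (γ)_l (α/(1−α))^l, where the left-hand series converges absolutely (with the convention 0^0 = 1 for the k = 0, m = 0 term). -/
/-!
Expanding `k ^ m = ∑ₗ S(m, l) · k(k-1)⋯(k-l+1)` reduces the series to the falling-factorial
moments of the negative binomial weights `αᵏ (γ)ₖ / k!`. Since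
`(γ)ₖ / k! · k(k-1)⋯(k-l+1) = (γ)ₗ (γ+l)ₖ₋ₗ / (k-l)!`, the `l`-th moment is `αˡ (γ)ₗ` times the
binomial series `∑ⱼ αʲ (γ+l)ⱼ / j! = (1-α)^(-γ-l)`.
-/

/-- Pochhammer symbol `(γ)_l = γ(γ+1)⋯(γ+l−1)`. -/
noncomputable def poch (γ : ℝ) (l : ℕ) : ℝ := ∏ i ∈ Finset.range l, (γ + i)

/-- Stirling numbers of the second kind. -/
def stirling2 : ℕ → ℕ → ℕ
  | 0, 0 => 1
  | 0, _+1 => 0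
  | _+1, 0 => 0
  | n+1, k+1 => (k+1) * stirling2 n (k+1) + stirling2 n k

open Polynomial Finset

theorem stirling2_eq_stirlingSecond : stirling2 = Nat.stirlingSecond := by
  funext n k
  induction n generalizing k with
  | zero => cases k <;> rfl
  | succ n ih => cases k <;> simp [stirling2, Nat.stirlingSecond_succ_succ, ih]

theorem pow_eq_sum_stirlingSecond_mul_descPochhammer_eval {R : Type*} [CommRing R] (x : R)
    (m : ℕ) :
    x ^ m = ∑ l ∈ range (m + 1), (Nat.stirlingSecond m l : R) * (descPochhammer R l).eval x := by
  induction m with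
  | zero => simp
  | succ m ih =>
    set d : ℕ → R := fun l => (descPochhammer R l).eval x
    set S : ℕ → R := fun l => (Nat.stirlingSecond m l : R)
    have hS : S (m + 1) = 0 := by simp [S, Nat.stirlingSecond_eq_zero_of_lt]
    have hmul : ∀ l, x * d l = d (l + 1) + l * d l := fun l => by
      simp only [d, descPochhammer_succ_eval]; ring
    have ih' : x ^ m = ∑ l ∈ range (m + 2), S l * d l := by
      rw [sum_range_succ, hS, zero_mul, add_zero, ih]
    calc x ^ (m + 1) = ∑ l ∈ range (m + 2), (S l * d (l + 1) + l * S l * d l) := by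
          rw [pow_succ', ih', mul_sum]
          exact sum_congr rfl fun l _ => by rw [mul_left_comm, hmul]; ring
      _ = ∑ l ∈ range (m + 1), (S l + (l + 1) * S (l + 1)) * d (l + 1) := by
          rw [sum_add_distrib, sum_range_succ (fun l => S l * d (l + 1)),
            sum_range_succ' (fun l => (l : R) * S l * d l), hS]
          simp only [Nat.cast_zero, zero_mul, add_zero, Nat.cast_succ, ← sum_add_distrib]
          exact sum_congr rfl fun l _ => by ring
      _ = ∑ l ∈ range (m + 2), (Nat.stirlingSecond (m + 1) l : R) * d l := by
          rw [sum_range_succ' _ (m + 1)]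
          simp only [S, Nat.stirlingSecond_succ_succ, Nat.stirlingSecond_succ_zero, Nat.cast_zero,
            zero_mul, add_zero, Nat.cast_add, Nat.cast_mul, Nat.cast_succ]
          exact sum_congr rfl fun l _ => by ring

theorem natCast_pow_eq_sum_stirlingSecond_mul_descFactorial {R : Type*} [CommRing R] (n m : ℕ) :
    (n : R) ^ m = ∑ l ∈ range (m + 1), (Nat.stirlingSecond m l : R) * n.descFactorial l := by
  simp only [pow_eq_sum_stirlingSecond_mul_descPochhammer_eval, descPochhammer_eval_eq_descFactorial]

theorem poch_add (γ : ℝ) (l j : ℕ) : poch γ (l + j) = poch γ l * poch (γ + l) j := by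
  rw [poch, prod_range_add]
  congr 1
  exact prod_congr rfl fun i _ => by push_cast; ring

theorem poch_nonneg {γ : ℝ} (hγ : 0 ≤ γ) (n : ℕ) : 0 ≤ poch γ n :=
  prod_nonneg fun i _ => by positivity

theorem poch_eq_ascPochhammer_eval (γ : ℝ) (n : ℕ) : poch γ n = (ascPochhammer ℝ n).eval γ := by
  induction n with
  | zero => simp [poch]
  | succ n ih => rw [poch, prod_range_succ, ← poch, ih, ascPochhammer_succ_eval]

theorem ring_choose_eq_poch_div_factorial (γ : ℝ) (n : ℕ) :
    Ring.choose (γ + n - 1) n = poch γ n / n.factorial := by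
  rw [Ring.choose_eq_smul, descPochhammer_smeval_eq_ascPochhammer, ascPochhammer_smeval_eq_eval,
    poch_eq_ascPochhammer_eval, smul_eq_mul, inv_mul_eq_div]
  ring_nf

theorem hasSum_pow_mul_poch_div_factorial (γ : ℝ) {x : ℝ} (hx : |x| < 1) :
    HasSum (fun n : ℕ => x ^ n * poch γ n / n.factorial) ((1 - x) ^ (-γ)) := by
  have h := (Real.one_div_one_sub_rpow_hasFPowerSeriesOnBall_zero γ).hasSum
    (y := x) (by simpa [enorm_eq_nnnorm, ← NNReal.coe_lt_coe] using hx)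
  simp only [FormalMultilinearSeries.ofScalars_apply_eq, ring_choose_eq_poch_div_factorial,
    smul_eq_mul, zero_add] at h
  rw [Real.rpow_neg (by linarith [le_abs_self x]), inv_eq_one_div]
  exact h.congr_fun fun n => by ring

theorem hasSum_pow_mul_poch_div_factorial_mul_descFactorial (γ : ℝ) {x : ℝ} (hx : |x| < 1)
    (l : ℕ) :
    HasSum (fun n : ℕ => x ^ n * poch γ n / n.factorial * n.descFactorial l)
      ((1 - x) ^ (-γ) * (poch γ l * (x / (1 - x)) ^ l)) := by
  have hx1 : 0 < 1 - x := by linarith [le_abs_self x]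
  set f : ℕ → ℝ := fun n => x ^ n * poch γ n / n.factorial * n.descFactorial l
  have hshift : ∀ j : ℕ,
      f (j + l) = x ^ l * poch γ l * (x ^ j * poch (γ + l) j / j.factorial) := by
    intro j
    have hfact : ((j + l).factorial : ℝ) = j.factorial * (j + l).descFactorial l := by
      have := Nat.factorial_mul_descFactorial (Nat.le_add_left l j)
      rw [Nat.add_sub_cancel] at this
      exact_mod_cast this.symm
    have hdesc : ((j + l).descFactorial l : ℝ) ≠ 0 := by
      exact_mod_cast (Nat.descFactorial_pos.2 (Nat.le_add_left l j)).ne'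
    simp only [f]
    rw [hfact, add_comm j l, poch_add, pow_add]
    field_simp
  have hhead : ∑ i ∈ range l, f i = 0 := sum_eq_zero fun i hi => by
    simp [f, Nat.descFactorial_eq_zero_iff_lt.2 (mem_range.1 hi)]
  have h := ((hasSum_pow_mul_poch_div_factorial (γ + l) hx).mul_left (x ^ l * poch γ l)).congr_fun
    hshift
  rw [hasSum_nat_add_iff, hhead, add_zero] at h
  have hval : x ^ l * poch γ l * (1 - x) ^ (-(γ + l))
      = (1 - x) ^ (-γ) * (poch γ l * (x / (1 - x)) ^ l) := by
    rw [neg_add, Real.rpow_add hx1, Real.rpow_neg hx1.le (l : ℝ), Real.rpow_natCast, div_pow,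
      div_eq_mul_inv]
    ring
  rwa [hval] at h

theorem hasSum_pow_mul_poch_div_factorial_mul_natCast_pow (γ : ℝ) {x : ℝ} (hx : |x| < 1)
    (m : ℕ) :
    HasSum (fun n : ℕ => x ^ n * poch γ n / n.factorial * (n : ℝ) ^ m)
      ((1 - x) ^ (-γ) *
        ∑ l ∈ range (m + 1), (Nat.stirlingSecond m l : ℝ) * poch γ l * (x / (1 - x)) ^ l) := by
  have h := hasSum_sum (s := range (m + 1)) fun l _ =>
    (hasSum_pow_mul_poch_div_factorial_mul_descFactorial γ hx l).mul_left
      (Nat.stirlingSecond m l : ℝ)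
  have hterm : ∀ n : ℕ, x ^ n * poch γ n / n.factorial * (n : ℝ) ^ m
      = ∑ l ∈ range (m + 1), (Nat.stirlingSecond m l : ℝ) *
          (x ^ n * poch γ n / n.factorial * n.descFactorial l) := fun n => by
    rw [natCast_pow_eq_sum_stirlingSecond_mul_descFactorial, mul_sum]
    exact sum_congr rfl fun l _ => by ring
  have hval : (1 - x) ^ (-γ) *
        ∑ l ∈ range (m + 1), (Nat.stirlingSecond m l : ℝ) * poch γ l * (x / (1 - x)) ^ l
      = ∑ l ∈ range (m + 1), (Nat.stirlingSecond m l : ℝ) *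
          ((1 - x) ^ (-γ) * (poch γ l * (x / (1 - x)) ^ l)) := by
    rw [mul_sum]
    exact sum_congr rfl fun l _ => by ring
  rw [hval, funext hterm]
  exact h

/-- For `m ∈ ℤ_{≥0}`, `0 < α < 1`, `γ > 0`:
`∑_{k=0}^∞ α^k (γ)_k/k! · k^m = (1−α)^{−γ} ∑_{l=0}^m S(m,l) (γ)_l (α/(1−α))^l`,
the left-hand series being absolutely convergent (with `0^0 = 1`). -/
theorem powerSum_eq_stirlingSum (m : ℕ) (α γ : ℝ) (hα0 : 0 < α) (hα1 : α < 1) (hγ : 0 < γ) :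
    Summable (fun k : ℕ => |α^k * poch γ k / (Nat.factorial k) * (k : ℝ)^m|) ∧
    ∑' k : ℕ, α^k * poch γ k / (Nat.factorial k) * (k : ℝ)^m
      = (1 - α) ^ (-γ) *
        ∑ l ∈ Finset.range (m+1), (stirling2 m l : ℝ) * poch γ l * (α/(1-α))^l := by
  have h := hasSum_pow_mul_poch_div_factorial_mul_natCast_pow γ
    (show |α| < 1 by rwa [abs_of_pos hα0]) m
  have hnonneg : ∀ k : ℕ, 0 ≤ α ^ k * poch γ k / k.factorial * (k : ℝ) ^ m := fun k => by
    have := poch_nonneg hγ.le k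
    positivity
  refine ⟨h.summable.congr fun k => (abs_of_nonneg (hnonneg k)).symm, ?_⟩
  rw [h.tsum_eq, stirling2_eq_stirlingSecond]
end

section
/- Let 0 ≤ α < 1, γ > 0, x > 0 and c < 1. Then the absolutely convergent integral (1/(2π)) ∫_{−∞}^{∞} ((1−α)x)^{−γ(c+iy)} Γ((1−α)^{−1} − c − iy) dy equals ((1−α)x)^{−γ/(1−α)} exp(−((1−α)x)^{−γ}), where the complex power is ((1−α)x)^{w} := exp(w · ln((1−α)x)) with the real logarithm, and Γ is the complex Gamma function. Consequently (γ/x) times this quantity divided by Γ(1/(1−α)) equals γ (1−α)^{−γ/(1−α)} Γ(1/(1−α))^{−1} x^{−1−γ/(1−α)} e^{−(1−α)^{−γ} x^{−γ}}, which is the first-order approximation to the α-Sun density. -/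
/-!
`Γ` is the Mellin transform of `t ↦ e^{-t}`, so Mellin inversion on the line `Re s = b > 0`
gives `(1/2π) ∫ z^{-(b+iy)} Γ(b+iy) dy = e^{-z}`. The inversion theorem applies because
`Γ(s) = Γ(s+2) / (s(s+1))` and `|Γ(s+2)| ≤ Γ(b+2)` make `Γ` decay like `1/(1+y²)` on that
line. Reflecting `y ↦ -y` and multiplying by `z^a` gives
`(1/2π) ∫ z^{c+iy} Γ(a-c-iy) dy = z^a e^{-z}` for `c < a`; the theorem is the case
`z = ((1-α)x)^{-γ}`, `a = 1/(1-α)`, where `exp(-γ(c+iy) log((1-α)x)) = z^{c+iy}`.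
-/

open MeasureTheory Complex

namespace Complex

theorem norm_Gamma_le_Gamma_re {s : ℂ} (hs : 0 < s.re) : ‖Gamma s‖ ≤ Real.Gamma s.re := by
  rw [Gamma_eq_integral hs, Real.Gamma_eq_integral hs, GammaIntegral]
  refine (norm_integral_le_integral_norm _).trans_eq <|
    setIntegral_congr_fun measurableSet_Ioi fun t ht => ?_
  simp [norm_cpow_eq_rpow_re_of_pos ht, norm_exp]

theorem mul_one_add_sq_le_norm_mul_add_one {b : ℝ} (hb : 0 < b) (y : ℝ) :
    min b 1 * (1 + y ^ 2) ≤ ‖(b + y * I) * (b + y * I + 1)‖ := by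
  have hm : min b 1 ^ 2 * (1 + y ^ 2) ≤ b ^ 2 + y ^ 2 := by
    have : min b 1 ^ 2 ≤ b ^ 2 := pow_le_pow_left₀ (by positivity) (min_le_left _ _) 2
    have : min b 1 ^ 2 ≤ 1 := pow_le_one₀ (by positivity) (min_le_right _ _)
    nlinarith [sq_nonneg y]
  have h1 : ‖(b + y * I : ℂ) + 1‖ ^ 2 = (b + 1) ^ 2 + y ^ 2 := by
    rw [Complex.sq_norm, show (b : ℂ) + y * I + 1 = ↑(b + 1) + y * I by push_cast; ring,
      normSq_add_mul_I]
  refine le_of_sq_le_sq ?_ (norm_nonneg _)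
  calc (min b 1 * (1 + y ^ 2)) ^ 2 = (min b 1 ^ 2 * (1 + y ^ 2)) * (1 + y ^ 2) := by ring
    _ ≤ (b ^ 2 + y ^ 2) * ((b + 1) ^ 2 + y ^ 2) := by gcongr; nlinarith
    _ = ‖(b + y * I) * (b + y * I + 1)‖ ^ 2 := by
      rw [norm_mul, mul_pow, h1, Complex.sq_norm, normSq_add_mul_I]

theorem norm_Gamma_add_mul_I_le {b : ℝ} (hb : 0 < b) (y : ℝ) :
    ‖Gamma (b + y * I)‖ ≤ Real.Gamma (b + 2) / min b 1 * (1 + y ^ 2)⁻¹ := by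
  set s : ℂ := b + y * I
  have hs : s ≠ 0 := fun h => hb.ne' (by simpa [s] using congrArg re h)
  have hs1 : s + 1 ≠ 0 := fun h => (by linarith : b + 1 ≠ 0) (by simpa [s] using congrArg re h)
  have hshift : Gamma (s + 2) = s * (s + 1) * Gamma s := by
    rw [show s + 2 = s + 1 + 1 by ring, Gamma_add_one _ hs1, Gamma_add_one _ hs]; ring
  have hre : (s + 2).re = b + 2 := by simp [s]
  calc ‖Gamma s‖ = ‖Gamma (s + 2)‖ / ‖s * (s + 1)‖ := by
        rw [hshift, norm_mul, mul_div_cancel_left₀ _ (norm_ne_zero_iff.mpr (mul_ne_zero hs hs1))]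
    _ ≤ Real.Gamma (b + 2) / (min b 1 * (1 + y ^ 2)) := by
        gcongr
        · exact hre ▸ norm_Gamma_le_Gamma_re (by linarith)
        · exact mul_one_add_sq_le_norm_mul_add_one hb y
    _ = Real.Gamma (b + 2) / min b 1 * (1 + y ^ 2)⁻¹ := by field_simp

theorem verticalIntegrable_Gamma {b : ℝ} (hb : 0 < b) : VerticalIntegrable Gamma b := by
  have hcont : Continuous fun y : ℝ => Gamma (b + y * I) := by
    refine continuous_iff_continuousAt.mpr fun y =>
      ContinuousAt.comp (g := Gamma) ?_ (by fun_prop)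
    refine (differentiableAt_Gamma _ fun n h => ?_).continuousAt
    linarith [n.cast_nonneg (α := ℝ), show b = -n by simpa using congrArg re h]
  exact (integrable_inv_one_add_sq.const_mul _).mono' hcont.aestronglyMeasurable
    (ae_of_all _ (norm_Gamma_add_mul_I_le hb))

theorem mellinInv_Gamma {b z : ℝ} (hb : 0 < b) (hz : 0 < z) : mellinInv b Gamma z = exp (-z) := by
  have hline : ∀ y : ℝ,
      Gamma (b + y * I) = mellin (fun t : ℝ => (Real.exp (-t) : ℂ)) (b + y * I) :=
    fun y => by rw [← GammaIntegral_eq_mellin, Gamma_eq_integral (by simpa using hb)]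
  have hconv : MellinConvergent (fun t : ℝ => (Real.exp (-t) : ℂ)) b := by
    simpa only [MellinConvergent, smul_eq_mul, mul_comm] using
      GammaIntegral_convergent (s := b) (by simpa using hb)
  have hinv := mellinInv_mellin_eq b _ hz hconv
    ((verticalIntegrable_Gamma hb).congr (ae_of_all _ hline)) (by fun_prop)
  simpa [mellinInv, hline] using hinv

theorem integrable_cpow_neg_mul_Gamma {b z : ℝ} (hb : 0 < b) (hz : 0 < z) :
    Integrable fun y : ℝ => (z : ℂ) ^ (-(b + y * I)) * Gamma (b + y * I) := by
  refine (verticalIntegrable_Gamma hb).bdd_mul (c := z ^ (-b)) ?_ (ae_of_all _ fun y => ?_)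
  · exact (continuous_const.cpow (by fun_prop) fun _ => .inl (by exact_mod_cast hz))
      |>.aestronglyMeasurable
  · simp [norm_cpow_eq_rpow_re_of_pos hz]

theorem cpow_mul_Gamma_sub_eq {a c z : ℝ} (hz : 0 < z) (y : ℝ) :
    (z : ℂ) ^ ((c : ℂ) + y * I) * Gamma (a - c - y * I) =
      (z : ℂ) ^ (a : ℂ) *
        ((z : ℂ) ^ (-(↑(a - c) + ↑(-y) * I)) * Gamma (↑(a - c) + ↑(-y) * I)) := by
  rw [← mul_assoc, ← cpow_add _ _ (by exact_mod_cast hz.ne')]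
  push_cast
  ring_nf

theorem integrable_cpow_mul_Gamma_sub {a c z : ℝ} (hca : c < a) (hz : 0 < z) :
    Integrable fun y : ℝ => (z : ℂ) ^ ((c : ℂ) + y * I) * Gamma (a - c - y * I) := by
  simpa only [cpow_mul_Gamma_sub_eq hz] using
    ((integrable_cpow_neg_mul_Gamma (sub_pos.2 hca) hz).comp_neg).const_mul ((z : ℂ) ^ (a : ℂ))

theorem integral_cpow_mul_Gamma_sub {a c z : ℝ} (hca : c < a) (hz : 0 < z) :
    1 / (2 * Real.pi : ℂ) * ∫ y : ℝ, (z : ℂ) ^ ((c : ℂ) + y * I) * Gamma (a - c - y * I) =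
      ((z ^ a * Real.exp (-z) : ℝ) : ℂ) := by
  have h := mellinInv_Gamma (sub_pos.2 hca) hz
  simp only [mellinInv, smul_eq_mul, real_smul] at h
  simp_rw [cpow_mul_Gamma_sub_eq hz, integral_const_mul]
  rw [integral_neg_eq_self
      (fun y : ℝ => (z : ℂ) ^ (-(↑(a - c) + ↑y * I)) * Gamma (↑(a - c) + ↑y * I)),
    mul_left_comm, ← ofReal_one, ← ofReal_ofNat, ← ofReal_mul, ← ofReal_div, h, ofReal_mul,
    ofReal_cpow hz.le, ofReal_exp, ofReal_neg]

end Complex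

open MeasureTheory Complex in
theorem firstOrder_mellin_inversion_general (α γ x c : ℝ)
    (hα0 : 0 ≤ α) (hα1 : α < 1) (hx : 0 < x) (hc : c < 1) :
    Integrable (fun y : ℝ =>
      Complex.exp ((-(γ : ℂ) * ((c : ℂ) + (y : ℂ) * Complex.I)) * (Real.log ((1-α)*x) : ℂ)) *
        Complex.Gamma ((((1-α)⁻¹ : ℝ) : ℂ) - (c : ℂ) - (y : ℂ) * Complex.I)) ∧
    (1/(2*(Real.pi : ℂ))) * ∫ y : ℝ,
        Complex.exp ((-(γ : ℂ) * ((c : ℂ) + (y : ℂ) * Complex.I)) * (Real.log ((1-α)*x) : ℂ)) *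
          Complex.Gamma ((((1-α)⁻¹ : ℝ) : ℂ) - (c : ℂ) - (y : ℂ) * Complex.I)
      = ((((1-α)*x) ^ (-γ/(1-α)) * Real.exp (-(((1-α)*x) ^ (-γ))) : ℝ) : ℂ) ∧
    γ / x * (((1-α)*x) ^ (-γ/(1-α)) * Real.exp (-(((1-α)*x) ^ (-γ)))) / Real.Gamma (1/(1-α))
      = γ * (1-α) ^ (-γ/(1-α)) * (Real.Gamma (1/(1-α)))⁻¹ * x ^ (-1-γ/(1-α)) *
          Real.exp (-((1-α) ^ (-γ)) * x ^ (-γ)) := by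
  have hα : 0 < 1 - α := by linarith
  have hX : 0 < (1 - α) * x := mul_pos hα hx
  have hz : 0 < ((1 - α) * x) ^ (-γ) := Real.rpow_pos_of_pos hX _
  have hca : c < (1 - α)⁻¹ := hc.trans_le ((one_le_inv₀ hα).2 (by linarith))
  have hcpow : ∀ y : ℝ,
      exp ((-(γ : ℂ) * ((c : ℂ) + (y : ℂ) * I)) * (Real.log ((1 - α) * x) : ℂ)) =
        ((((1 - α) * x) ^ (-γ) : ℝ) : ℂ) ^ ((c : ℂ) + y * I) := fun y => by
    rw [cpow_def_of_ne_zero (by exact_mod_cast hz.ne'), ← ofReal_log hz.le, Real.log_rpow hX]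
    push_cast
    ring_nf
  have hpow : (((1 - α) * x) ^ (-γ)) ^ (1 - α)⁻¹ = ((1 - α) * x) ^ (-γ / (1 - α)) := by
    rw [← Real.rpow_mul hX.le, div_eq_mul_inv]
  simp_rw [hcpow]
  refine ⟨integrable_cpow_mul_Gamma_sub hca hz, hpow ▸ integral_cpow_mul_Gamma_sub hca hz, ?_⟩
  rw [Real.mul_rpow hα.le hx.le, Real.mul_rpow hα.le hx.le, sub_eq_add_neg (-1 : ℝ),
    Real.rpow_add hx, Real.rpow_neg_one, neg_div, neg_mul]
  ring

open MeasureTheory Complex in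
/-- For `0 ≤ α < 1`, `γ > 0`, `x > 0`, `c < 1`, the absolutely convergent contour integral
`(1/2π) ∫_ℝ ((1−α)x)^{−γ(c+iy)} Γ((1−α)^{−1} − c − iy) dy` equals
`((1−α)x)^{−γ/(1−α)} exp(−((1−α)x)^{−γ})`, where `((1−α)x)^w := exp(w·ln((1−α)x))`.
Consequently `γ/x` times this quantity divided by `Γ(1/(1−α))` equals the first-order
approximation `γ (1−α)^{−γ/(1−α)} Γ(1/(1−α))^{−1} x^{−1−γ/(1−α)} e^{−(1−α)^{−γ}x^{−γ}}`. -/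
theorem firstOrder_mellin_inversion (α γ x c : ℝ)
    (hα0 : 0 ≤ α) (hα1 : α < 1) (hγ : 0 < γ) (hx : 0 < x) (hc : c < 1) :
    Integrable (fun y : ℝ =>
      Complex.exp ((-(γ : ℂ) * ((c : ℂ) + (y : ℂ) * Complex.I)) * (Real.log ((1-α)*x) : ℂ)) *
        Complex.Gamma ((((1-α)⁻¹ : ℝ) : ℂ) - (c : ℂ) - (y : ℂ) * Complex.I)) ∧
    (1/(2*(Real.pi : ℂ))) * ∫ y : ℝ,
        Complex.exp ((-(γ : ℂ) * ((c : ℂ) + (y : ℂ) * Complex.I)) * (Real.log ((1-α)*x) : ℂ)) *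
          Complex.Gamma ((((1-α)⁻¹ : ℝ) : ℂ) - (c : ℂ) - (y : ℂ) * Complex.I)
      = ((((1-α)*x) ^ (-γ/(1-α)) * Real.exp (-(((1-α)*x) ^ (-γ))) : ℝ) : ℂ) ∧
    γ / x * (((1-α)*x) ^ (-γ/(1-α)) * Real.exp (-(((1-α)*x) ^ (-γ)))) / Real.Gamma (1/(1-α))
      = γ * (1-α) ^ (-γ/(1-α)) * (Real.Gamma (1/(1-α)))⁻¹ * x ^ (-1-γ/(1-α)) *
          Real.exp (-((1-α) ^ (-γ)) * x ^ (-γ)) :=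
  firstOrder_mellin_inversion_general α γ x c hα0 hα1 hx hc
end

section
/- Let m ∈ ℕ with m ≥ 2, let ω_m = e^{2πi/m}, and let z ∈ ℂ be such that z^m ≠ n^m for every positive integer n (equivalently, z ∉ ℕ·ω_m^{−j} for all j = 0,…,m−1). Then the infinite product ∏_{n=1}^∞ n^m/(n^m − z^m) converges and equals ∏_{j=0}^{m−1} Γ(1 − ω_m^j z), where Γ is the complex Gamma function. Furthermore, if |z| < 1 then ∏_{j=0}^{m−1} Γ(1 − ω_m^j z) = exp(∑_{k=1}^∞ (ζ(mk)/k) z^{mk}), where ζ is the Riemann zeta function. -/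
/-!
Since `n^m - z^m = ∏_j (n - ω^j z)`, the partial product splits into the `m` products
`∏_{n ≤ N} n / (n - w)` with `w = ω^j z`. Multiplied by `N^{-w}`, each of them is Gauss's product
for `Γ(1 - w)`, and these normalising factors multiply to `1` because `∑_j ω^j = 0`.

For `|z| < 1`, the partial products are also `exp ∑_{n ≤ N} -log(1 - z^m/n^m)`; expanding each
logarithm as `∑_k z^{mk}/(k n^{mk})` and exchanging the absolutely convergent double sum turns the
inner sums over `n` into `ζ(mk)`.
-/

open Filter Topology Complex Finset

theorem Finset.prod_Icc_one_eq_prod_range {M : Type*} [CommMonoid M] (f : ℕ → M) (N : ℕ) :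
    ∏ n ∈ Icc 1 N, f n = ∏ n ∈ range N, f (n + 1) := by
  rw [← Ico_add_one_right_eq_Icc, prod_Ico_eq_prod_range, Nat.add_sub_cancel]
  simp only [add_comm 1]

theorem IsPrimitiveRoot.pow_sub_pow_eq_prod_range {R : Type*} [CommRing R] [IsDomain R] {ω : R}
    {m : ℕ} (hω : IsPrimitiveRoot ω m) (hm : 0 < m) (x y : R) :
    x ^ m - y ^ m = ∏ j ∈ range m, (x - ω ^ j * y) := by
  simpa [Polynomial.eval_prod] using
    congrArg (Polynomial.eval x) (X_pow_sub_C_eq_prod hω hm (rfl : y ^ m = y ^ m))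

theorem IsPrimitiveRoot.prod_div_sub_pow_mul {K : Type*} [Field K] {ω : K} {m : ℕ}
    (hω : IsPrimitiveRoot ω m) (hm : 0 < m) (x y : K) :
    ∏ j ∈ range m, x / (x - ω ^ j * y) = x ^ m / (x ^ m - y ^ m) := by
  rw [prod_div_distrib, prod_const, card_range, hω.pow_sub_pow_eq_prod_range hm]

theorem IsPrimitiveRoot.prod_cpow_neg_pow_mul_eq_one {ω : ℂ} {m : ℕ} (hω : IsPrimitiveRoot ω m)
    (hm : 1 < m) {x : ℂ} (hx : x ≠ 0) (z : ℂ) :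
    ∏ j ∈ range m, x ^ (-(ω ^ j * z)) = 1 := by
  simp_rw [cpow_def_of_ne_zero hx, ← exp_sum, ← mul_sum, sum_neg_distrib, ← sum_mul,
    hω.geom_sum_eq_zero hm]
  simp

theorem prod_Icc_div_sub_mul_cpow_neg_eq_GammaSeq {w : ℂ} (hw : ∀ n : ℕ, 0 < n → (n : ℂ) ≠ w)
    {N : ℕ} (hN : N ≠ 0) :
    (∏ n ∈ Icc 1 N, (n : ℂ) / (n - w)) * (N : ℂ) ^ (-w) =
      GammaSeq (1 - w) N * ((N + 1 - w) / N) := by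
  have hNc : (N : ℂ) ≠ 0 := Nat.cast_ne_zero.2 hN
  have hfact : ∏ n ∈ Icc 1 N, (n : ℂ) = N.factorial := by
    rw [← Ico_add_one_right_eq_Icc, ← prod_Ico_id_eq_factorial, Nat.cast_prod]
  have hden : ∏ k ∈ range (N + 1), (1 - w + k) =
      (∏ n ∈ Icc 1 N, ((n : ℂ) - w)) * (N + 1 - w) := by
    rw [prod_range_succ, prod_Icc_one_eq_prod_range]
    push_cast
    ring_nf
  have hden0 : ∏ n ∈ Icc 1 N, ((n : ℂ) - w) ≠ 0 :=
    prod_ne_zero_iff.2 fun n hn => sub_ne_zero.2 (hw n (by simp at hn; omega))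
  have hlast : (N : ℂ) + 1 - w ≠ 0 := by
    have := hw (N + 1) N.succ_pos; push_cast at this; exact sub_ne_zero.2 this
  rw [GammaSeq, hden, prod_div_distrib, hfact, sub_eq_add_neg, cpow_add _ _ hNc, cpow_one]
  field_simp

theorem tendsto_prod_Icc_div_sub_mul_cpow_neg_Gamma {w : ℂ}
    (hw : ∀ n : ℕ, 0 < n → (n : ℂ) ≠ w) :
    Tendsto (fun N : ℕ => (∏ n ∈ Icc 1 N, (n : ℂ) / (n - w)) * (N : ℂ) ^ (-w)) atTop
      (𝓝 (Gamma (1 - w))) := by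
  have hcorr : Tendsto (fun N : ℕ => ((N : ℂ) + 1 - w) / N) atTop (𝓝 1) := by
    have := (tendsto_const_div_atTop_nhds_zero_nat (1 - w)).const_add (1 : ℂ)
    rw [add_zero] at this
    refine this.congr' ?_
    filter_upwards [eventually_ne_atTop 0] with N hN
    field_simp
    ring
  have h := (GammaSeq_tendsto_Gamma (1 - w)).mul hcorr
  rw [mul_one] at h
  refine h.congr' ?_
  filter_upwards [eventually_ne_atTop 0] with N hN
  exact (prod_Icc_div_sub_mul_cpow_neg_eq_GammaSeq hw hN).symm

theorem tendsto_prod_Icc_pow_div_pow_sub_pow_Gamma {ω : ℂ} {m : ℕ} (hω : IsPrimitiveRoot ω m)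
    (hm : 1 < m) {z : ℂ} (hz : ∀ n : ℕ, 0 < n → z ^ m ≠ (n : ℂ) ^ m) :
    Tendsto (fun N : ℕ => ∏ n ∈ Icc 1 N, ((n : ℂ) ^ m / ((n : ℂ) ^ m - z ^ m))) atTop
      (𝓝 (∏ j ∈ range m, Gamma (1 - ω ^ j * z))) := by
  have hw : ∀ j, ∀ n : ℕ, 0 < n → (n : ℂ) ≠ ω ^ j * z := fun j n hn h => hz n hn <| by
    rw [h, mul_pow, pow_right_comm, hω.pow_eq_one, one_pow, one_mul]
  refine (tendsto_finsetProd _ fun j _ =>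
    tendsto_prod_Icc_div_sub_mul_cpow_neg_Gamma (hw j)).congr' ?_
  filter_upwards [eventually_ne_atTop 0] with N hN
  rw [prod_mul_distrib, hω.prod_cpow_neg_pow_mul_eq_one hm (Nat.cast_ne_zero.2 hN), mul_one,
    Finset.prod_comm]
  exact prod_congr rfl fun n _ => hω.prod_div_sub_pow_mul (by omega) _ _

section LogSeries

variable {ι : Type*} {b : ι → ℂ} {r : ℝ}

theorem summable_pow_succ_div_of_summable_norm (hb : Summable (‖b ·‖)) (hr0 : 0 ≤ r)
    (hr1 : r < 1) (hbr : ∀ i, ‖b i‖ ≤ r) :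
    Summable fun p : ι × ℕ => b p.1 ^ (p.2 + 1) / (p.2 + 1) := by
  refine .of_norm_bounded (hb.mul_of_nonneg (summable_geometric_of_lt_one hr0 hr1)
    (fun _ => norm_nonneg _) fun _ => pow_nonneg hr0 _) fun ⟨i, k⟩ => ?_
  have hk : (1 : ℝ) ≤ ‖(k : ℂ) + 1‖ := by
    rw [← Nat.cast_add_one, norm_natCast]; exact_mod_cast k.succ_pos
  calc ‖b i ^ (k + 1) / (k + 1)‖ ≤ ‖b i‖ ^ (k + 1) := by
        rw [norm_div, norm_pow]; exact div_le_self (by positivity) hk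
    _ = ‖b i‖ * ‖b i‖ ^ k := pow_succ' _ _
    _ ≤ ‖b i‖ * r ^ k := by gcongr; exact hbr i

theorem hasProd_inv_one_sub_of_summable_norm (hb : Summable (‖b ·‖)) (hr0 : 0 ≤ r)
    (hr1 : r < 1) (hbr : ∀ i, ‖b i‖ ≤ r) :
    HasProd (fun i => (1 - b i)⁻¹) (exp (∑' k : ℕ, (∑' i, b i ^ (k + 1)) / (k + 1))) := by
  have hb1 : ∀ i, ‖b i‖ < 1 := fun i => (hbr i).trans_lt hr1
  have hF := summable_pow_succ_div_of_summable_norm hb hr0 hr1 hbr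
  have hfib : ∀ i, HasSum (fun k : ℕ => b i ^ (k + 1) / (k + 1)) (-log (1 - b i)) :=
    fun i => hasSum_taylorSeries_neg_log' (hb1 i)
  have hlog : HasSum (fun i => -log (1 - b i)) (∑' p : ι × ℕ, b p.1 ^ (p.2 + 1) / (p.2 + 1)) :=
    hF.hasSum.prod_fiberwise hfib
  have hswap : ∑' p : ι × ℕ, b p.1 ^ (p.2 + 1) / (p.2 + 1) =
      ∑' k : ℕ, (∑' i, b i ^ (k + 1)) / (k + 1) := by
    rw [← (Equiv.prodComm ℕ ι).tsum_eq]
    simp only [Equiv.prodComm_apply]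
    rw [hF.prod_symm.tsum_prod]
    simp only [Prod.swap_prod_mk, tsum_div_const]
  rw [← hswap]
  convert hlog.cexp using 1
  funext i
  have : 1 - b i ≠ 0 := sub_ne_zero.2 fun h => by simpa [← h] using hb1 i
  simp [exp_neg, exp_log this]

end LogSeries

theorem tsum_div_add_one_pow_pow_succ_eq_riemannZeta {m : ℕ} (hm : 1 < m) (z : ℂ) (k : ℕ) :
    ∑' n : ℕ, (z ^ m / ((n : ℂ) + 1) ^ m) ^ (k + 1) =
      riemannZeta ((m * (k + 1) : ℕ) : ℂ) * z ^ (m * (k + 1)) := by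
  have hs : 1 < ((m * (k + 1) : ℕ) : ℂ).re := by
    rw [natCast_re]; exact_mod_cast hm.trans_le (Nat.le_mul_of_pos_right m k.succ_pos)
  simp_rw [zeta_eq_tsum_one_div_nat_add_one_cpow hs, cpow_natCast, div_pow, ← pow_mul,
    ← tsum_mul_right, one_div_mul_eq_div]

theorem hasProd_add_one_pow_div_sub_pow_exp_riemannZeta {m : ℕ} (hm : 1 < m) {z : ℂ}
    (hz : ‖z‖ < 1) :
    HasProd (fun n : ℕ => ((n : ℂ) + 1) ^ m / (((n : ℂ) + 1) ^ m - z ^ m))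
      (exp (∑' k : ℕ, riemannZeta ((m * (k + 1) : ℕ) : ℂ) / (k + 1) * z ^ (m * (k + 1)))) := by
  have hnorm : ∀ n : ℕ, ‖z ^ m / ((n : ℂ) + 1) ^ m‖ = ‖z‖ ^ m * (1 / ((n : ℝ) + 1) ^ m) := by
    intro n
    rw [norm_div, norm_pow, norm_pow, ← Nat.cast_add_one, norm_natCast]
    push_cast; ring
  have hsum : Summable fun n : ℕ => ‖z ^ m / ((n : ℂ) + 1) ^ m‖ := by
    simp_rw [hnorm]
    refine Summable.mul_left _ ?_
    exact_mod_cast (summable_nat_add_iff 1).2 (Real.summable_one_div_nat_pow.2 hm)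
  have hle : ∀ n : ℕ, ‖z ^ m / ((n : ℂ) + 1) ^ m‖ ≤ ‖z‖ ^ m := fun n => by
    rw [hnorm]
    exact mul_le_of_le_one_right (by positivity)
      (div_le_one_of_le₀ (one_le_pow₀ (by linarith [n.cast_nonneg (α := ℝ)])) (by positivity))
  convert hasProd_inv_one_sub_of_summable_norm hsum (by positivity)
    (pow_lt_one₀ (norm_nonneg z) hz (by omega)) hle using 2
  · rw [one_sub_div (pow_ne_zero _ (Nat.cast_add_one_ne_zero _)), inv_div]
  · refine tsum_congr fun k => ?_
    rw [tsum_div_add_one_pow_pow_succ_eq_riemannZeta hm]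
    ring

open Filter in
/-- For `m ≥ 2`, `ω_m = e^{2πi/m}`, and `z ∈ ℂ` with `z^m ≠ n^m` for all positive integers `n`:
`∏_{n=1}^∞ n^m/(n^m − z^m)` converges to `∏_{j=0}^{m−1} Γ(1 − ω_m^j z)`. Furthermore, if
`|z| < 1` then `∏_{j=0}^{m−1} Γ(1 − ω_m^j z) = exp(∑_{k≥1} (ζ(mk)/k) z^{mk})`. -/
theorem gamma_products (m : ℕ) (hm : 2 ≤ m)
    (ω : ℂ) (hω : ω = Complex.exp (2 * (Real.pi : ℂ) * Complex.I / (m : ℂ)))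
    (z : ℂ) (hz : ∀ n : ℕ, 0 < n → z^m ≠ (n : ℂ)^m) :
    Tendsto (fun N : ℕ => ∏ n ∈ Finset.Icc 1 N, ((n : ℂ)^m / ((n : ℂ)^m - z^m)))
      atTop (nhds (∏ j ∈ Finset.range m, Complex.Gamma (1 - ω^j * z))) ∧
    (‖z‖ < 1 →
      ∏ j ∈ Finset.range m, Complex.Gamma (1 - ω^j * z)
        = Complex.exp (∑' k : ℕ, riemannZeta ((m * (k+1) : ℕ) : ℂ) / ((k : ℂ)+1)
            * z^(m*(k+1)))) := by
  have hprim : IsPrimitiveRoot ω m := hω ▸ isPrimitiveRoot_exp m (by omega)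
  have hlim := tendsto_prod_Icc_pow_div_pow_sub_pow_Gamma hprim hm hz
  refine ⟨hlim, fun hz1 => tendsto_nhds_unique hlim ?_⟩
  refine (hasProd_add_one_pow_div_sub_pow_exp_riemannZeta hm hz1).tendsto_prod_nat.congr fun N => ?_
  rw [prod_Icc_one_eq_prod_range]
  push_cast
  rfl
end
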